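/- Assume quasi-symmetry. Then for every closed half-space H ⊆ ℝ^k bounded by a hyperplane through 0 containing no β_i, one has ∑_{i : β_i∈H} [0,β_i] = (1/2)∑_{i : β_i∈H} β_i + ∇. In particular, for any two such half-spaces H₁, H₂ the zonotopes ∇_{H₁} = ∑_{β_i∈H₁}[0,β_i] and ∇_{H₂} differ by a translation, each being a translate of ∇. -/

import Mathlib

/-! Split `∑_i [0, β_i]` into the parts over `H` and over its complement. Grouping the vectors by the
line they span, segments lying on one ray add up to a single segment, and quasi-symmetry says that
on each line the vectors on the two sides of the hyperplane have opposite sums. Hence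
`∑_{β_i ∉ H} [0, β_i] = ∑_{β_i ∈ H} [0, -β_i]`, so `∇ = ½ ∑_{β_i ∈ H} ([0, β_i] + [0, -β_i])`, and
the claim follows termwise from `[0, b] = ½ b + ½ [-b, b]`. -/

open Pointwise Finset
open scoped Classical

theorem Set.singleton_sum {ι M : Type*} [AddCommMonoid M] (s : Finset ι) (x : ι → M) :
    ({∑ i ∈ s, x i} : Set M) = ∑ i ∈ s, {x i} :=
  map_sum Set.singletonAddMonoidHom x s

variable {𝕜 E ι : Type*} [Field 𝕜] [AddCommGroup E] [Module 𝕜 E]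

theorem mem_span_singleton_iff_inv_smul_eq {φ : E →ₗ[𝕜] 𝕜} {v x : E} (hv : φ v = 1)
    (hx : φ x ≠ 0) : x ∈ 𝕜 ∙ v ↔ (φ x)⁻¹ • x = v := by
  constructor
  · intro h
    obtain ⟨c, rfl⟩ := Submodule.mem_span_singleton.mp h
    rw [map_smul, hv, smul_eq_mul, mul_one] at hx ⊢
    exact inv_smul_smul₀ hx v
  · rintro rfl
    exact Submodule.mem_span_singleton.mpr ⟨φ x, smul_inv_smul₀ hx x⟩

variable [LinearOrder 𝕜] [IsStrictOrderedRing 𝕜]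

section Segment

theorem smul_segment (a : 𝕜) (x y : E) : a • segment 𝕜 x y = segment 𝕜 (a • x) (a • y) := by
  rw [← Set.image_smul]
  exact image_segment 𝕜 (LinearMap.lsmul 𝕜 E a).toAffineMap x y

theorem segment_zero_smul_add_segment_zero_smul (v : E) {a b : 𝕜} (ha : 0 ≤ a) (hb : 0 ≤ b) :
    segment 𝕜 0 (a • v) + segment 𝕜 0 (b • v) = segment 𝕜 0 ((a + b) • v) := by
  have h (c : 𝕜) : segment 𝕜 0 (c • v) = c • segment 𝕜 0 v := by rw [smul_segment, smul_zero]
  rw [h, h, h, (convex_segment 0 v).add_smul ha hb]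

theorem sum_segment_zero_smul {s : Finset ι} {t : ι → 𝕜} (ht : ∀ i ∈ s, 0 ≤ t i) (v : E) :
    ∑ i ∈ s, segment 𝕜 0 (t i • v) = segment 𝕜 0 ((∑ i ∈ s, t i) • v) := by
  induction s using Finset.cons_induction with
  | empty => simp [segment_same]; rfl
  | cons a s ha ih =>
    rw [forall_mem_cons] at ht
    rw [sum_cons, sum_cons, ih ht.2,
      segment_zero_smul_add_segment_zero_smul v ht.1 (sum_nonneg ht.2)]

theorem singleton_add_segment_zero_neg (b : E) : {b} + segment 𝕜 0 (-b) = segment 𝕜 0 b := by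
  rw [Set.singleton_add, segment_translate_image, add_zero, add_neg_cancel, segment_symm]

theorem segment_zero_eq_singleton_half_add (b : E) :
    segment 𝕜 0 b = {(2 : 𝕜)⁻¹ • b} + (2 : 𝕜)⁻¹ • (segment 𝕜 0 b + segment 𝕜 0 (-b)) := by
  rw [smul_add, add_left_comm, ← Set.smul_set_singleton, ← smul_add,
    singleton_add_segment_zero_neg, (convex_segment 0 b).add_half_self_eq_self]

/- `(φ x)⁻¹ • x` is where the ray through `x` meets the hyperplane `φ = 1`, so the fibres of this
map are the rays met by `s`. -/
theorem sum_segment_zero_eq_sum_fiberwise (φ : E →ₗ[𝕜] 𝕜) {s : Finset ι} {γ : ι → E}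
    (hs : ∀ i ∈ s, 0 < φ (γ i)) {T : Finset E} (hT : ∀ i ∈ s, (φ (γ i))⁻¹ • γ i ∈ T) :
    ∑ i ∈ s, segment 𝕜 0 (γ i) =
      ∑ v ∈ T, segment 𝕜 0 ((∑ i ∈ s with (φ (γ i))⁻¹ • γ i = v, φ (γ i)) • v) := by
  rw [← sum_fiberwise_of_maps_to hT]
  refine sum_congr rfl fun v _ => ?_
  rw [← sum_segment_zero_smul fun i hi => (hs i (mem_filter.1 hi).1).le]
  refine sum_congr rfl fun i hi => ?_
  obtain ⟨his, rfl⟩ := mem_filter.1 hi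
  rw [smul_inv_smul₀ (hs i his).ne']

end Segment

section QuasiSymmetric

variable (𝕜) in
def IsQuasiSymmetric [Fintype ι] (γ : ι → E) : Prop :=
  ∀ L : Submodule 𝕜 E, Module.finrank 𝕜 L = 1 → ∑ i with γ i ∈ L, γ i = 0

variable [Fintype ι] {γ : ι → E}

theorem IsQuasiSymmetric.sum_neg_eq_sum_pos (hγ : IsQuasiSymmetric 𝕜 γ) (φ : E →ₗ[𝕜] 𝕜) {v : E}
    (hv : φ v = 1) :
    ∑ i with φ (γ i) < 0 ∧ (φ (γ i))⁻¹ • γ i = v, -φ (γ i) =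
      ∑ i with 0 < φ (γ i) ∧ (φ (γ i))⁻¹ • γ i = v, φ (γ i) := by
  have hv0 : v ≠ 0 := by rintro rfl; simp at hv
  have h := congrArg φ (hγ _ (finrank_span_singleton hv0))
  rw [map_sum, map_zero, sum_filter] at h
  rw [sum_neg_distrib, neg_eq_iff_add_eq_zero, sum_filter, sum_filter, ← sum_add_distrib]
  refine Eq.trans (sum_congr rfl fun i _ => ?_) h
  rcases lt_trichotomy (φ (γ i)) 0 with hi | hi | hi
  · simp [hi, hi.not_gt, mem_span_singleton_iff_inv_smul_eq hv hi.ne]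
  · simp [hi]
  · simp [hi, hi.not_gt, mem_span_singleton_iff_inv_smul_eq hv hi.ne']

theorem IsQuasiSymmetric.sum_segment_zero_neg_eq (hγ : IsQuasiSymmetric 𝕜 γ)
    (φ : E →ₗ[𝕜] 𝕜) :
    ∑ i with φ (γ i) < 0, segment 𝕜 0 (-γ i) = ∑ i with 0 < φ (γ i), segment 𝕜 0 (γ i) := by
  set T := (univ.filter fun i => φ (γ i) ≠ 0).image fun i => (φ (γ i))⁻¹ • γ i
  have hT (i) (hi : φ (γ i) ≠ 0) : (φ (γ i))⁻¹ • γ i ∈ T :=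
    mem_image_of_mem _ (mem_filter.2 ⟨mem_univ i, hi⟩)
  rw [sum_segment_zero_eq_sum_fiberwise φ (γ := fun i => -γ i) (T := T)
      (fun i hi => by simpa using (mem_filter.1 hi).2)
      (fun i hi => by simpa using hT i (mem_filter.1 hi).2.ne),
    sum_segment_zero_eq_sum_fiberwise φ (T := T) (fun i hi => (mem_filter.1 hi).2)
      (fun i hi => hT i (mem_filter.1 hi).2.ne')]
  refine sum_congr rfl fun v hv => ?_
  obtain ⟨i, hi, rfl⟩ := mem_image.1 hv
  have hφv : φ ((φ (γ i))⁻¹ • γ i) = 1 := by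
    rw [map_smul, smul_eq_mul, inv_mul_cancel₀ (mem_filter.1 hi).2]
  simp only [map_neg, inv_neg, neg_smul, smul_neg, neg_neg, filter_filter]
  rw [hγ.sum_neg_eq_sum_pos φ hφv]

end QuasiSymmetric

theorem halfspace_zonotope_is_translate_of_nabla
    {N k : ℕ}
    (β : Fin N → (Fin k → ℝ))
    -- quasi-symmetry: for every 1-dimensional subspace `L`, `∑_{β_i ∈ L} β_i = 0`
    (hqs : ∀ L : Submodule ℝ (Fin k → ℝ), Module.finrank ℝ L = 1 →
      ∑ i ∈ Finset.univ.filter (fun i => β i ∈ L), β i = 0)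
    (f : (Fin k → ℝ) →ₗ[ℝ] ℝ) (hfβ : ∀ i, f (β i) ≠ 0) :
    ∑ i ∈ Finset.univ.filter (fun i => f (β i) ≤ 0), segment ℝ 0 (β i) =
      {(2⁻¹ : ℝ) • ∑ i ∈ Finset.univ.filter (fun i => f (β i) ≤ 0), β i} +
        (2⁻¹ : ℝ) • ∑ i : Fin N, segment ℝ 0 (β i) := by
  have hneg : ∑ i with f (β i) ≤ 0, segment ℝ 0 (-β i) =
      ∑ i with ¬f (β i) ≤ 0, segment ℝ 0 (β i) := by
    simp only [not_le, filter_congr fun i _ => (hfβ i).le_iff_lt]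
    exact IsQuasiSymmetric.sum_segment_zero_neg_eq hqs f
  rw [← sum_filter_add_sum_filter_not univ fun i => f (β i) ≤ 0, ← hneg, ← sum_add_distrib,
    smul_sum, smul_sum, Set.singleton_sum, ← sum_add_distrib]
  exact sum_congr rfl fun i _ => segment_zero_eq_singleton_half_add (β i)
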